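/- arXiv:quant-ph/0505110 — 3 statements merged into one kernel-verified Lean document; each statement's English description precedes it below -/
import Mathlib

section
/- A channel Λ on the bipartite system A × B is A↛B semicausal if and only if (D_A ⊗ id) ∘ Λ ∘ (D_A ⊗ id) = (D_A ⊗ id) ∘ Λ as linear maps on matrices indexed by A × B. -/
open Matrix BigOperators
open scoped Kronecker ComplexOrder

noncomputable section

/-- Partial trace over the `A` factor. -/
def trA {A B : Type*} [Fintype A] (ρ : Matrix (A × B) (A × B) ℂ) : Matrix B B ℂ :=
  Matrix.of fun b b' => ∑ a, ρ (a, b) (a, b')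

/-- Partial trace over the `B` factor. -/
def trB {A B : Type*} [Fintype B] (ρ : Matrix (A × B) (A × B) ℂ) : Matrix A A ℂ :=
  Matrix.of fun a a' => ∑ b, ρ (a, b) (a', b)

/-- A state: positive semidefinite matrix of trace 1. -/
def IsState {n : Type*} [Fintype n] (ρ : Matrix n n ℂ) : Prop :=
  ρ.PosSemidef ∧ ρ.trace = 1

/-- A channel: a map admitting a Kraus representation `Λ[X] = ∑ i, K i * X * (K i)ᴴ`
with `∑ i, (K i)ᴴ * K i = 1` (completely positive and trace-preserving). -/
def IsChannel {n : Type*} [Fintype n] [DecidableEq n]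
    (Λ : Matrix n n ℂ → Matrix n n ℂ) : Prop :=
  ∃ (m : ℕ) (K : Fin m → Matrix n n ℂ),
    (∀ X, Λ X = ∑ i, K i * X * (K i)ᴴ) ∧ (∑ i, (K i)ᴴ * K i = 1)

/-- The induced map `Γ ⊗ id` on the bipartite system, acting blockwise. -/
def tensIdA {A B : Type*} (Γ : Matrix A A ℂ → Matrix A A ℂ)
    (ρ : Matrix (A × B) (A × B) ℂ) : Matrix (A × B) (A × B) ℂ :=
  Matrix.of fun p q => Γ (Matrix.of fun a a' => ρ (a, p.2) (a', q.2)) p.1 q.1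

/-- The induced map `id ⊗ Γ` on the bipartite system, acting blockwise. -/
def tensIdB {A B : Type*} (Γ : Matrix B B ℂ → Matrix B B ℂ)
    (ρ : Matrix (A × B) (A × B) ℂ) : Matrix (A × B) (A × B) ℂ :=
  Matrix.of fun p q => Γ (Matrix.of fun b b' => ρ (p.1, b) (q.1, b')) p.2 q.2

/-- `Λ` is A↛B semicausal: no channel applied by Alice beforehand affects Bob's
reduced output state. -/
def SemicausalAtoB {A B : Type*} [Fintype A] [Fintype B] [DecidableEq A]
    (Λ : Matrix (A × B) (A × B) ℂ → Matrix (A × B) (A × B) ℂ) : Prop :=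
  ∀ ρ : Matrix (A × B) (A × B) ℂ, IsState ρ →
    ∀ Γ : Matrix A A ℂ → Matrix A A ℂ, IsChannel Γ →
      trA (Λ (tensIdA Γ ρ)) = trA (Λ ρ)

/-- `Λ` is A↚B semicausal: no channel applied by Bob beforehand affects Alice's
reduced output state. -/
def SemicausalBtoA {A B : Type*} [Fintype A] [Fintype B] [DecidableEq B]
    (Λ : Matrix (A × B) (A × B) ℂ → Matrix (A × B) (A × B) ℂ) : Prop :=
  ∀ ρ : Matrix (A × B) (A × B) ℂ, IsState ρ →
    ∀ Γ : Matrix B B ℂ → Matrix B B ℂ, IsChannel Γ →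
      trB (Λ (tensIdB Γ ρ)) = trB (Λ ρ)

/-- `Λ` is causal: both A↛B and A↚B semicausal. -/
def Causal {A B : Type*} [Fintype A] [Fintype B] [DecidableEq A] [DecidableEq B]
    (Λ : Matrix (A × B) (A × B) ℂ → Matrix (A × B) (A × B) ℂ) : Prop :=
  SemicausalAtoB Λ ∧ SemicausalBtoA Λ

/-- The totally depolarizing channel `D[X] = Tr(X)·I/|A|`. -/
def depol {A : Type*} [Fintype A] [DecidableEq A] : Matrix A A ℂ → Matrix A A ℂ :=
  fun X => (X.trace / (Fintype.card A : ℂ)) • (1 : Matrix A A ℂ)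

/-! `tensIdA depol` is `X ↦ |A|⁻¹ • (1 ⊗ₖ trA X)`: it sees `X` only through its partial trace
and preserves that partial trace. So the right-hand side says exactly
`trA ∘ Λ ∘ (D_A ⊗ id) = trA ∘ Λ`.
Semicausality with `Γ = D_A` gives this on states, and states span all matrices (polarization
of rank-one projectors), so by linearity it holds everywhere. Conversely, every `Γ ⊗ id` with `Γ`
trace preserving leaves `trA` unchanged, hence is invisible after `D_A ⊗ id`, and the
commutation identity carries this through `Λ`. -/

namespace IsChannel

variable {n : Type*} [Fintype n] [DecidableEq n] {Λ : Matrix n n ℂ → Matrix n n ℂ}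

theorem trace_apply (h : IsChannel Λ) (X : Matrix n n ℂ) : (Λ X).trace = X.trace := by
  obtain ⟨m, K, hK, hsum⟩ := h
  calc (Λ X).trace = ∑ i, ((K i)ᴴ * K i * X).trace := by
        rw [hK, trace_sum]
        exact Finset.sum_congr rfl fun i _ => by rw [trace_mul_cycle, Matrix.mul_assoc]
    _ = X.trace := by rw [← trace_sum, ← Finset.sum_mul, hsum, Matrix.one_mul]

theorem isLinearMap (h : IsChannel Λ) : IsLinearMap ℂ Λ := by
  obtain ⟨m, K, hK, -⟩ := h
  constructor <;> intros <;>
    simp [hK, Matrix.mul_add, Matrix.add_mul, Finset.sum_add_distrib, Finset.smul_sum]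

theorem of_kraus {ι : Type*} [Fintype ι] (K : ι → Matrix n n ℂ)
    (hK : ∑ i, (K i)ᴴ * K i = 1) : IsChannel fun X => ∑ i, K i * X * (K i)ᴴ := by
  let e := Fintype.equivFin ι
  refine ⟨Fintype.card ι, K ∘ e.symm, fun X => (e.symm.sum_comp _).symm, ?_⟩
  rw [← hK]
  exact e.symm.sum_comp fun i => (K i)ᴴ * K i

end IsChannel

section PartialTrace

variable {A B : Type*}

theorem isLinearMap_tensIdA {Γ : Matrix A A ℂ → Matrix A A ℂ} (hΓ : IsLinearMap ℂ Γ) :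
    IsLinearMap ℂ (tensIdA (B := B) Γ) := by
  constructor
  · intro X Y; ext p q
    exact congrFun₂ (hΓ.map_add (of fun a a' => X (a, p.2) (a', q.2))
      (of fun a a' => Y (a, p.2) (a', q.2))) p.1 q.1
  · intro c X; ext p q
    exact congrFun₂ (hΓ.map_smul c (of fun a a' => X (a, p.2) (a', q.2))) p.1 q.1

variable [Fintype A]

theorem isLinearMap_trA : IsLinearMap ℂ (trA : Matrix (A × B) (A × B) ℂ → Matrix B B ℂ) := by
  constructor <;> intros <;> ext <;> simp [trA, Finset.sum_add_distrib, Finset.mul_sum]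

theorem trA_tensIdA_of_trace_preserving {Γ : Matrix A A ℂ → Matrix A A ℂ}
    (hΓ : ∀ X, (Γ X).trace = X.trace) (X : Matrix (A × B) (A × B) ℂ) :
    trA (tensIdA Γ X) = trA X := by
  ext b b'
  simpa [trA, tensIdA, trace] using hΓ (of fun a a' => X (a, b) (a', b'))

theorem trA_kronecker (N : Matrix A A ℂ) (M : Matrix B B ℂ) : trA (N ⊗ₖ M) = N.trace • M := by
  ext b b'
  simp [trA, trace, Finset.sum_mul]

variable [DecidableEq A]

theorem tensIdA_depol_eq (X : Matrix (A × B) (A × B) ℂ) :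
    tensIdA depol X = (Fintype.card A : ℂ)⁻¹ • ((1 : Matrix A A ℂ) ⊗ₖ trA X) := by
  ext p q
  simp only [tensIdA, depol, trA, trace, diag, of_apply, Matrix.smul_apply, kroneckerMap_apply,
    smul_eq_mul]
  ring

theorem tensIdA_depol_eq_of_trA_eq {X Y : Matrix (A × B) (A × B) ℂ} (h : trA X = trA Y) :
    tensIdA depol X = tensIdA depol Y := by
  rw [tensIdA_depol_eq, tensIdA_depol_eq, h]

theorem trA_tensIdA_depol [Nonempty A] (X : Matrix (A × B) (A × B) ℂ) :
    trA (tensIdA depol X) = trA X := by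
  rw [tensIdA_depol_eq, isLinearMap_trA.map_smul, trA_kronecker, trace_one, smul_smul,
    inv_mul_cancel₀ (by simp), one_smul]

end PartialTrace

section Depolarizing

variable {A : Type*} [Fintype A] [DecidableEq A] {c : ℂ}

theorem depol_eq_sum_single_mul_mul_conjTranspose (hc : c * star c = (Fintype.card A : ℂ)⁻¹)
    (X : Matrix A A ℂ) :
    depol X = ∑ p : A × A, single p.1 p.2 c * X * (single p.1 p.2 c)ᴴ := by
  simp only [conjTranspose_single, single_mul_mul_single, Fintype.sum_prod_type]
  ext i j
  simp [depol, Matrix.sum_apply, single_apply, one_apply, trace, div_eq_inv_mul, ← hc, ite_and,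
    Finset.mul_sum, mul_right_comm]

theorem sum_conjTranspose_single_mul_single [Nonempty A]
    (hc : c * star c = (Fintype.card A : ℂ)⁻¹) :
    ∑ p : A × A, (single p.1 p.2 c)ᴴ * single p.1 p.2 c = 1 := by
  simp only [conjTranspose_single, single_mul_single_same, Fintype.sum_prod_type]
  rw [Complex.star_def] at hc
  ext i j
  simp [Matrix.sum_apply, single_apply, one_apply, ite_and, mul_comm _ c, hc]

theorem isChannel_depol [Nonempty A] : IsChannel (depol (A := A)) := by
  set c : ℂ := ((Real.sqrt (Fintype.card A) : ℝ) : ℂ)⁻¹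
  have hc : c * star c = (Fintype.card A : ℂ)⁻¹ := by
    simp only [c, star_inv₀, Complex.star_def, Complex.conj_ofReal, ← mul_inv,
      ← Complex.ofReal_mul, Real.mul_self_sqrt (Nat.cast_nonneg _), Complex.ofReal_natCast]
  rw [funext (depol_eq_sum_single_mul_mul_conjTranspose hc)]
  exact IsChannel.of_kraus _ (sum_conjTranspose_single_mul_single hc)

end Depolarizing

section States

variable {n : Type*}

theorem vecMulVec_star_eq_polarization (u v : n → ℂ) :
    vecMulVec u (star v) = (4 : ℂ)⁻¹ • (vecMulVec (u + v) (star (u + v))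
      - vecMulVec (u - v) (star (u - v))
      + Complex.I • vecMulVec (u + Complex.I • v) (star (u + Complex.I • v))
      - Complex.I • vecMulVec (u - Complex.I • v) (star (u - Complex.I • v))) := by
  ext i j
  simp only [vecMulVec_apply, Matrix.sub_apply, Matrix.add_apply, Matrix.smul_apply,
    Pi.add_apply, Pi.sub_apply, Pi.smul_apply, Pi.star_apply, star_add, star_sub, star_smul,
    smul_eq_mul, Complex.star_def, Complex.conj_I]
  linear_combination (u i * starRingEnd ℂ (v j) - v i * starRingEnd ℂ (u j)) / 2 * Complex.I_sq

variable [Fintype n]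

theorem Matrix.PosSemidef.mem_span_isState {ρ : Matrix n n ℂ} (hρ : ρ.PosSemidef) :
    ρ ∈ Submodule.span ℂ {σ : Matrix n n ℂ | IsState σ} := by
  by_cases h : ρ.trace = 0
  · rw [hρ.trace_eq_zero_iff.mp h]
    exact Submodule.zero_mem _
  · have hstate : IsState (ρ.trace⁻¹ • ρ) :=
      ⟨hρ.smul (inv_nonneg.mpr hρ.trace_nonneg),
        by rw [trace_smul, smul_eq_mul, inv_mul_cancel₀ h]⟩
    have hρ_eq : ρ = ρ.trace • (ρ.trace⁻¹ • ρ) := by rw [smul_smul, mul_inv_cancel₀ h, one_smul]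
    rw [hρ_eq]
    exact Submodule.smul_mem _ _ (Submodule.subset_span hstate)

theorem span_isState_eq_top [DecidableEq n] :
    Submodule.span ℂ {ρ : Matrix n n ℂ | IsState ρ} = ⊤ := by
  set S := Submodule.span ℂ {ρ : Matrix n n ℂ | IsState ρ}
  have hpure (w : n → ℂ) : vecMulVec w (star w) ∈ S :=
    (posSemidef_vecMulVec_self_star w).mem_span_isState
  have hrankOne (u v : n → ℂ) : vecMulVec u (star v) ∈ S := by
    rw [vecMulVec_star_eq_polarization]
    exact S.smul_mem _ (S.sub_mem (S.add_mem (S.sub_mem (hpure _) (hpure _))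
      (S.smul_mem _ (hpure _))) (S.smul_mem _ (hpure _)))
  rw [eq_top_iff, ← (stdBasis ℂ n n).span_eq, Submodule.span_le]
  rintro _ ⟨⟨i, j⟩, rfl⟩
  simpa [stdBasis_eq_single, single_eq_single_vecMulVec_single] using
    hrankOne (Pi.single i 1) (Pi.single j 1)

end States

theorem stmt_3_general {A B : Type*} [Fintype A] [Fintype B] [DecidableEq A] [DecidableEq B]
    [Nonempty A]
    (Λ : Matrix (A × B) (A × B) ℂ → Matrix (A × B) (A × B) ℂ) (hΛ : IsChannel Λ) :
    SemicausalAtoB Λ ↔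
      ∀ X : Matrix (A × B) (A × B) ℂ,
        tensIdA depol (Λ (tensIdA depol X)) = tensIdA depol (Λ X) := by
  constructor
  · intro hΛ_sc X
    have hD : IsChannel (depol (A := A)) := isChannel_depol
    let trAΛ := isLinearMap_trA.mk' _ ∘ₗ hΛ.isLinearMap.mk' Λ
    have htrAΛ : trAΛ ∘ₗ (isLinearMap_tensIdA hD.isLinearMap).mk' _ = trAΛ :=
      LinearMap.ext_on span_isState_eq_top fun ρ hρ => hΛ_sc ρ hρ depol hD
    exact tensIdA_depol_eq_of_trA_eq (LinearMap.congr_fun htrAΛ X)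
  · intro hcomm ρ _ Γ hΓ
    calc trA (Λ (tensIdA Γ ρ))
        = trA (tensIdA depol (Λ (tensIdA depol (tensIdA Γ ρ)))) := by
          rw [hcomm, trA_tensIdA_depol]
      _ = trA (tensIdA depol (Λ (tensIdA depol ρ))) := by
          rw [tensIdA_depol_eq_of_trA_eq (trA_tensIdA_of_trace_preserving hΓ.trace_apply ρ)]
      _ = trA (Λ ρ) := by rw [hcomm, trA_tensIdA_depol]

/-- a channel is A↛B semicausal iff
`(D_A ⊗ id) ∘ Λ ∘ (D_A ⊗ id) = (D_A ⊗ id) ∘ Λ` as maps on all matrices. -/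
theorem stmt_3 {A B : Type*} [Fintype A] [Fintype B] [DecidableEq A] [DecidableEq B]
    [Nonempty A] [Nonempty B]
    (Λ : Matrix (A × B) (A × B) ℂ → Matrix (A × B) (A × B) ℂ) (hΛ : IsChannel Λ) :
    SemicausalAtoB Λ ↔
      ∀ X : Matrix (A × B) (A × B) ℂ,
        tensIdA depol (Λ (tensIdA depol X)) = tensIdA depol (Λ X) :=
  stmt_3_general Λ hΛ
end
end

section
/- Let {F_i} (finite family) be a POVM on the bipartite system A × B (each F_i positive semidefinite with Σ_i F_i = I), and let {σ_i} be states on A × B whose marginals are constant: there are fixed matrices τ_A, τ_B with Tr_B(σ_i) = τ_A and Tr_A(σ_i) = τ_B for every i. Then the entanglement-breaking map Λ[ρ] = Σ_i Tr(F_i ρ)·σ_i is a channel and is causal. -/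
open Matrix BigOperators
open scoped Kronecker ComplexOrder

noncomputable section

/-! Writing `F i = M iᴴ * M i` and `σ i = S i * (S i)ᴴ`, the rank-one operators
`vecMulVec (column j of S i) (row k of M i)` form a Kraus family of the measure-and-prepare map `Λ`;
the completeness relation uses `Tr σ i = 1` and `∑ i, F i = 1`. Since all `σ i` have the same
marginals, `Tr_A Λ[X] = Tr X • τB` and `Tr_B Λ[X] = Tr X • τA` depend on `X` only through its
trace, which a local channel does not change. -/

section

variable {n : Type*} [Fintype n]

theorem sum_vecMulVec_mul_mul_conjTranspose {m l : Type*} [Fintype m] [Fintype l]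
    (S : Matrix n m ℂ) (M : Matrix l n ℂ) (X : Matrix n n ℂ) :
    ∑ j, ∑ k, vecMulVec (Sᵀ j) (M k) * X * (vecMulVec (Sᵀ j) (M k))ᴴ
      = (Mᴴ * M * X).trace • (S * Sᴴ) := by
  ext p q
  simp only [Matrix.sum_apply, mul_apply, conjTranspose_apply, vecMulVec_apply, transpose_apply,
    Matrix.smul_apply, smul_eq_mul, trace, diag, star_mul', Finset.sum_mul, Finset.mul_sum,
    ← Fintype.sum_prod_type']
  exact Fintype.sum_equiv
    ⟨fun x => (x.1, x.2.2.1, x.2.2.2, x.2.1), fun x => (x.1, x.2.2.2, x.2.1, x.2.2.1),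
      fun _ => rfl, fun _ => rfl⟩ _ _ fun _ => by simp only [Equiv.coe_fn_mk]; ring

theorem sum_conjTranspose_vecMulVec_mul {m l : Type*} [Fintype m] [Fintype l]
    (S : Matrix n m ℂ) (M : Matrix l n ℂ) :
    ∑ j, ∑ k, (vecMulVec (Sᵀ j) (M k))ᴴ * vecMulVec (Sᵀ j) (M k)
      = (S * Sᴴ).trace • (Mᴴ * M) := by
  ext p q
  simp only [Matrix.sum_apply, mul_apply, conjTranspose_apply, vecMulVec_apply, transpose_apply,
    Matrix.smul_apply, smul_eq_mul, trace, diag, star_mul', Finset.sum_mul, Finset.mul_sum,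
    ← Fintype.sum_prod_type']
  exact Fintype.sum_equiv ⟨fun x => (x.2.1, x.2.2, x.1), fun x => (x.2.2, x.1, x.2.1),
    fun _ => rfl, fun _ => rfl⟩ _ _ fun _ => by simp only [Equiv.coe_fn_mk]; ring

theorem isChannel_of_kraus [DecidableEq n] {κ : Type*} [Fintype κ]
    {Λ : Matrix n n ℂ → Matrix n n ℂ} (K : κ → Matrix n n ℂ)
    (hΛ : ∀ X, Λ X = ∑ u, K u * X * (K u)ᴴ) (hK : ∑ u, (K u)ᴴ * K u = 1) : IsChannel Λ := by
  let e := Fintype.equivFin κ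
  refine ⟨Fintype.card κ, K ∘ e.symm, fun X => ?_, ?_⟩
  · rw [hΛ, ← e.symm.sum_comp]; rfl
  · rw [← hK, ← e.symm.sum_comp]; rfl

open scoped MatrixOrder in
theorem isChannel_sum_trace_mul_smul [DecidableEq n] {ι : Type*} [Fintype ι]
    (F σ : ι → Matrix n n ℂ) (hF : ∀ i, (F i).PosSemidef) (hFsum : ∑ i, F i = 1)
    (hσ : ∀ i, IsState (σ i)) : IsChannel fun X => ∑ i, (F i * X).trace • σ i := by
  choose M hM using fun i =>
    CStarAlgebra.nonneg_iff_eq_star_mul_self (a := F i) |>.mp (hF i).nonneg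
  choose S hS using fun i =>
    CStarAlgebra.nonneg_iff_eq_mul_star_self (a := σ i) |>.mp (hσ i).1.nonneg
  refine isChannel_of_kraus (fun u : ι × n × n => vecMulVec ((S u.1)ᵀ u.2.1) (M u.1 u.2.2))
    (fun X => ?_) ?_
  · simp only [Fintype.sum_prod_type, sum_vecMulVec_mul_mul_conjTranspose]
    simp only [← star_eq_conjTranspose, ← hM, ← hS]
  · simp only [Fintype.sum_prod_type, sum_conjTranspose_vecMulVec_mul]
    simp only [← star_eq_conjTranspose, ← hM, ← hS, (hσ _).2, one_smul, hFsum]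

theorem IsChannel.trace_apply_s14 [DecidableEq n] {Γ : Matrix n n ℂ → Matrix n n ℂ}
    (hΓ : IsChannel Γ) (X : Matrix n n ℂ) : (Γ X).trace = X.trace := by
  obtain ⟨m, K, hΓ_eq, hK⟩ := hΓ
  simp only [hΓ_eq, trace_sum, trace_mul_cycle _ X]
  rw [← trace_sum, ← Finset.sum_mul, hK, one_mul]

theorem sum_trace_mul_of_sum_eq_one [DecidableEq n] {ι : Type*} [Fintype ι]
    {F : ι → Matrix n n ℂ}     (hFsum : ∑ i, F i = 1) (X : Matrix n n ℂ) :
    ∑ i, (F i * X).trace = X.trace := by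
  rw [← trace_sum, ← Finset.sum_mul, hFsum, one_mul]

end

section Bipartite

variable {A B : Type*}

theorem trace_tensIdA [Fintype A] [Fintype B] {Γ : Matrix A A ℂ → Matrix A A ℂ}
    (hΓ : ∀ X, (Γ X).trace = X.trace)
    (ρ : Matrix (A × B) (A × B) ℂ) : (tensIdA Γ ρ).trace = ρ.trace := by
  simp only [trace, diag, Fintype.sum_prod_type_right]
  exact Finset.sum_congr rfl fun b _ => hΓ (of fun a a' => ρ (a, b) (a', b))

theorem trace_tensIdB [Fintype A] [Fintype B] {Γ : Matrix B B ℂ → Matrix B B ℂ}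
    (hΓ : ∀ X, (Γ X).trace = X.trace)
    (ρ : Matrix (A × B) (A × B) ℂ) : (tensIdB Γ ρ).trace = ρ.trace := by
  simp only [trace, diag, Fintype.sum_prod_type]
  exact Finset.sum_congr rfl fun a _ => hΓ (of fun b b' => ρ (a, b) (a, b'))

theorem trA_sum_smul [Fintype A] {ι : Type*} [Fintype ι] (c : ι → ℂ)
    (σ : ι → Matrix (A × B) (A × B) ℂ) :
    trA (∑ i, c i • σ i) = ∑ i, c i • trA (σ i) := by
  ext b b'
  simp only [trA, of_apply, Matrix.sum_apply, Matrix.smul_apply, smul_eq_mul, Finset.mul_sum]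
  exact Finset.sum_comm

theorem trB_sum_smul [Fintype B] {ι : Type*} [Fintype ι] (c : ι → ℂ)
    (σ : ι → Matrix (A × B) (A × B) ℂ) :
    trB (∑ i, c i • σ i) = ∑ i, c i • trB (σ i) := by
  ext a a'
  simp only [trB, of_apply, Matrix.sum_apply, Matrix.smul_apply, smul_eq_mul, Finset.mul_sum]
  exact Finset.sum_comm

theorem trA_sum_trace_mul_smul [Fintype A] [Fintype B] [DecidableEq A] [DecidableEq B]
    {ι : Type*} [Fintype ι] {F σ : ι → Matrix (A × B) (A × B) ℂ}
    (hFsum : ∑ i, F i = 1) {τ : Matrix B B ℂ} (hσ : ∀ i, trA (σ i) = τ)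
    (X : Matrix (A × B) (A × B) ℂ) : trA (∑ i, (F i * X).trace • σ i) = X.trace • τ := by
  simp only [trA_sum_smul, hσ, ← Finset.sum_smul, sum_trace_mul_of_sum_eq_one hFsum]

theorem trB_sum_trace_mul_smul [Fintype A] [Fintype B] [DecidableEq A] [DecidableEq B]
    {ι : Type*} [Fintype ι] {F σ : ι → Matrix (A × B) (A × B) ℂ}
    (hFsum : ∑ i, F i = 1) {τ : Matrix A A ℂ} (hσ : ∀ i, trB (σ i) = τ)
    (X : Matrix (A × B) (A × B) ℂ) : trB (∑ i, (F i * X).trace • σ i) = X.trace • τ := by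
  simp only [trB_sum_smul, hσ, ← Finset.sum_smul, sum_trace_mul_of_sum_eq_one hFsum]

theorem semicausalAtoB_of_trA_eq_trace_smul [Fintype A] [Fintype B] [DecidableEq A]
    {Λ : Matrix (A × B) (A × B) ℂ → Matrix (A × B) (A × B) ℂ} {τ : Matrix B B ℂ}
    (h : ∀ X, trA (Λ X) = X.trace • τ) : SemicausalAtoB Λ := fun ρ _ _ hΓ => by
  rw [h, h, trace_tensIdA hΓ.trace_apply_s14]

theorem semicausalBtoA_of_trB_eq_trace_smul [Fintype A] [Fintype B] [DecidableEq B]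
    {Λ : Matrix (A × B) (A × B) ℂ → Matrix (A × B) (A × B) ℂ} {τ : Matrix A A ℂ}
    (h : ∀ X, trB (Λ X) = X.trace • τ) : SemicausalBtoA Λ := fun ρ _ _ hΓ => by
  rw [h, h, trace_tensIdB hΓ.trace_apply_s14]

end Bipartite

theorem stmt_14_general {A B : Type*} [Fintype A] [Fintype B] [DecidableEq A] [DecidableEq B]
    {ι : Type*} [Fintype ι]
    (F : ι → Matrix (A × B) (A × B) ℂ)
    (hFpos : ∀ i, (F i).PosSemidef) (hFsum : ∑ i, F i = 1)
    (σ : ι → Matrix (A × B) (A × B) ℂ) (hσ : ∀ i, IsState (σ i))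
    (τA : Matrix A A ℂ) (τB : Matrix B B ℂ)
    (hτA : ∀ i, trB (σ i) = τA) (hτB : ∀ i, trA (σ i) = τB) :
    IsChannel (fun X => ∑ i, (F i * X).trace • σ i) ∧
    Causal (fun X => ∑ i, (F i * X).trace • σ i) :=
  ⟨isChannel_sum_trace_mul_smul F σ hFpos hFsum hσ,
    semicausalAtoB_of_trA_eq_trace_smul (trA_sum_trace_mul_smul hFsum hτB),
    semicausalBtoA_of_trB_eq_trace_smul (trB_sum_trace_mul_smul hFsum hτA)⟩

/-- an entanglement-breaking map `Λ[ρ] = ∑ i, Tr(F_i ρ)·σ_i` built from a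
POVM `{F_i}` and states `{σ_i}` with constant marginals is a causal channel. -/
theorem stmt_14 {A B : Type*} [Fintype A] [Fintype B] [DecidableEq A] [DecidableEq B]
    [Nonempty A] [Nonempty B] {ι : Type*} [Fintype ι]
    (F : ι → Matrix (A × B) (A × B) ℂ)
    (hFpos : ∀ i, (F i).PosSemidef) (hFsum : ∑ i, F i = 1)
    (σ : ι → Matrix (A × B) (A × B) ℂ) (hσ : ∀ i, IsState (σ i))
    (τA : Matrix A A ℂ) (τB : Matrix B B ℂ)
    (hτA : ∀ i, trB (σ i) = τA) (hτB : ∀ i, trA (σ i) = τB) :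
    IsChannel (fun X => ∑ i, (F i * X).trace • σ i) ∧
    Causal (fun X => ∑ i, (F i * X).trace • σ i) :=
  stmt_14_general F hFpos hFsum σ hσ τA τB hτA hτB
end
end

section
/- On two qubits, let Λ_NL be the coherent non-local box channel Λ_NL[ρ] = (1−p)|ψ₀⟩⟨ψ₀| + p|ψ₁⟩⟨ψ₁| with p = ⟨11|ρ|11⟩, |ψ₀⟩ = (|00⟩ + |11⟩)/√2, |ψ₁⟩ = (|01⟩ + |10⟩)/√2. For inputs x, y ∈ {0,1} define the correlators E(x,y) = Tr[ (σ_z ⊗ σ_z) · Λ_NL[|x⟩⟨x| ⊗ |y⟩⟨y|] ], where σ_z = diag(1,−1). Then E(0,0) + E(0,1) + E(1,0) − E(1,1) = 4, i.e., the CHSH expression attains its algebraic maximum 4, exceeding both the local-hidden-variable bound 2 and the Cirel'son bound 2√2. -/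
open Matrix BigOperators
open scoped Kronecker ComplexOrder

noncomputable section

/-- The rank-one projector `|v⟩⟨v|` onto a vector `v`. -/
def projv {n : Type*} (v : n → ℂ) : Matrix n n ℂ :=
  Matrix.of fun i j => v i * star (v j)

/-- The tensor (Kronecker) product of two vectors. -/
def vtens {A B : Type*} (x : A → ℂ) (y : B → ℂ) : A × B → ℂ := fun p => x p.1 * y p.2

/-- `|ψ₀⟩ = (|00⟩ + |11⟩)/√2`. -/
def psi0 : Fin 2 × Fin 2 → ℂ :=
  fun p => if p.1 = p.2 then ((Real.sqrt 2 : ℂ))⁻¹ else 0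

/-- `|ψ₁⟩ = (|01⟩ + |10⟩)/√2`. -/
def psi1 : Fin 2 × Fin 2 → ℂ :=
  fun p => if p.1 ≠ p.2 then ((Real.sqrt 2 : ℂ))⁻¹ else 0

/-- The coherent quantum non-local box: on a state `ρ`,
`Λ_NL[ρ] = (1−p)|ψ₀⟩⟨ψ₀| + p|ψ₁⟩⟨ψ₁|` with `p = ⟨11|ρ|11⟩`. -/
def lamNL (X : Matrix (Fin 2 × Fin 2) (Fin 2 × Fin 2) ℂ) :
    Matrix (Fin 2 × Fin 2) (Fin 2 × Fin 2) ℂ :=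
  (X.trace - X (1, 1) (1, 1)) • projv psi0 + X (1, 1) (1, 1) • projv psi1

/-- The standard basis vector `|x⟩` of `ℂ²`. -/
def ket (x : Fin 2) : Fin 2 → ℂ := fun i => if i = x then 1 else 0

/-- The Pauli matrix `σ_z = diag(1, −1)`. -/
def sigmaZ : Matrix (Fin 2) (Fin 2) ℂ :=
  Matrix.of fun i j => if i = j then (if i = 0 then 1 else -1) else 0

/-- The correlator `E(x,y) = Tr[(σ_z ⊗ σ_z) · Λ_NL[|x⟩⟨x| ⊗ |y⟩⟨y|]]`. -/
def corr (x y : Fin 2) : ℂ :=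
  ((sigmaZ ⊗ₖ sigmaZ) * lamNL (projv (vtens (ket x) (ket y)))).trace
/-!
`Λ_NL` sends every product basis state `|xy⟩⟨xy|` to `|ψ₀⟩⟨ψ₀|`, except `|11⟩⟨11|`, which it sends
to `|ψ₁⟩⟨ψ₁|`. Since `σ_z ⊗ σ_z` is diagonal with eigenvalue `1` on `|00⟩, |11⟩` and `-1` on
`|01⟩, |10⟩`, this gives `E(x,y) = (-1)^(xy)`, so the CHSH combination is `1 + 1 + 1 + 1`.
-/

theorem projv_eq_vecMulVec {n : Type*} (v : n → ℂ) : projv v = vecMulVec v (star v) := rfl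

theorem projv_single_one {n : Type*} [DecidableEq n] (i : n) :
    projv (Pi.single i 1) = Matrix.single i i (1 : ℂ) := by
  rw [projv_eq_vecMulVec, ← Pi.single_star, star_one, single_eq_single_vecMulVec_single]

theorem trace_diagonal_mul_projv {n : Type*} [Fintype n] [DecidableEq n] (d v : n → ℂ) :
    (diagonal d * projv v).trace = ∑ i, d i * (v i * star (v i)) := by
  simp [trace, diagonal_mul, projv]

theorem vtens_single_one {A B : Type*} [DecidableEq A] [DecidableEq B] (a : A) (b : B) :
    vtens (Pi.single a (1 : ℂ)) (Pi.single b 1) = Pi.single (a, b) 1 := by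
  ext ⟨a', b'⟩
  by_cases ha : a' = a <;> by_cases hb : b' = b <;> simp [vtens, ha, hb]

theorem ket_eq_single (x : Fin 2) : ket x = Pi.single x 1 := by
  ext i
  simp [ket, Pi.single_apply]

theorem sigmaZ_eq_diagonal : sigmaZ = diagonal fun i => if i = 0 then 1 else -1 := by
  ext i j
  by_cases h : i = j <;> simp [sigmaZ, h]

theorem lamNL_single (p : Fin 2 × Fin 2) :
    lamNL (Matrix.single p p 1) = if p = (1, 1) then projv psi1 else projv psi0 := by
  by_cases hp : p = (1, 1)
  · subst hp
    simp [lamNL]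
  · simp [lamNL, hp]

theorem inv_sqrt_two_mul_self : ((Real.sqrt 2 : ℂ))⁻¹ * ((Real.sqrt 2 : ℂ))⁻¹ = 1 / 2 := by
  rw [← mul_inv, ← Complex.ofReal_mul, Real.mul_self_sqrt zero_le_two]
  norm_num

theorem trace_sigmaZ_kronecker_sigmaZ_mul_projv_psi0 :
    ((sigmaZ ⊗ₖ sigmaZ) * projv psi0).trace = 1 := by
  rw [sigmaZ_eq_diagonal, diagonal_kronecker_diagonal, trace_diagonal_mul_projv]
  norm_num [Fintype.sum_prod_type, Fin.sum_univ_two, psi0, inv_sqrt_two_mul_self]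

theorem trace_sigmaZ_kronecker_sigmaZ_mul_projv_psi1 :
    ((sigmaZ ⊗ₖ sigmaZ) * projv psi1).trace = -1 := by
  rw [sigmaZ_eq_diagonal, diagonal_kronecker_diagonal, trace_diagonal_mul_projv]
  norm_num [Fintype.sum_prod_type, Fin.sum_univ_two, psi1, inv_sqrt_two_mul_self]

theorem corr_eq_ite (x y : Fin 2) : corr x y = if (x, y) = (1, 1) then -1 else 1 := by
  rw [corr, ket_eq_single, ket_eq_single, vtens_single_one, projv_single_one, lamNL_single]
  split_ifs
  exacts [trace_sigmaZ_kronecker_sigmaZ_mul_projv_psi1,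
    trace_sigmaZ_kronecker_sigmaZ_mul_projv_psi0]

/-- the CHSH expression of the coherent non-local box attains the
algebraic maximum 4, exceeding the local-hidden-variable bound 2 and the Cirel'son
bound 2√2. -/
theorem stmt_19 :
    corr 0 0 + corr 0 1 + corr 1 0 - corr 1 1 = 4 ∧
    (2 : ℝ) < 4 ∧ 2 * Real.sqrt 2 < 4 := by
  refine ⟨?_, by norm_num, ?_⟩
  · simp only [corr_eq_ite]
    norm_num
  · have sqrt_two_lt_two : Real.sqrt 2 < 2 := (Real.sqrt_lt' two_pos).2 (by norm_num)
    linarith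
end
end
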